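/- Fix d ≥ 1 and a susceptible set 𝒮 ⊆ ℤ^d. Let Γ = (x_j, a_j)_{j=1}^k be a legal sequence of moves starting at a configuration η and ending at η′, and let X ⊆ 𝒮. Let Γ^X be the sequence obtained from Γ by ignoring (replacing by no move) every move that would set a site of X to healthy. Then Γ^X is a legal sequence of moves starting from η, and for every i ≤ k the configurations Γ_i(η) and Γ^X_i(η) differ only on sites of X; in particular, the set of infected sites of Γ_i(η) is contained in the set of infected sites of Γ^X_i(η), and the final configuration Γ^X_k(η) differs from η′ only on X. -/
import Mathlib


open Classical

/-- Nearest-neighbour adjacency in ℤ^d. -/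
def AdjD {d : ℕ} (x y : Fin d → ℤ) : Prop :=
  ∃ j : Fin d, (y j = x j + 1 ∨ y j = x j - 1) ∧ ∀ i : Fin d, i ≠ j → y i = x i

/-- A site is infected: susceptible and its state is infected. -/
def Infct {d : ℕ} (sus : Set (Fin d → ℤ)) (η : (Fin d → ℤ) → Bool) (x : Fin d → ℤ) : Prop :=
  x ∈ sus ∧ η x = true

/-- The FA2f constraint at `x`: at least two nearest neighbours of `x` are susceptible
and infected. -/
def Constr {d : ℕ} (sus : Set (Fin d → ℤ)) (η : (Fin d → ℤ) → Bool) (x : Fin d → ℤ) : Prop :=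
  2 ≤ {y : Fin d → ℤ | AdjD x y ∧ Infct sus η y}.ncard

/-- The configuration after applying the first `n` moves of `ms` to `η`; a move `(x, a)`
sets the state at `x` to `a` (`true` = infected). -/
def evolve {d : ℕ} (η : (Fin d → ℤ) → Bool) (ms : ℕ → (Fin d → ℤ) × Bool) :
    ℕ → ((Fin d → ℤ) → Bool)
  | 0 => η
  | n + 1 => Function.update (evolve η ms n) (ms n).1 (ms n).2

/-- The first `k` moves of `ms` form a legal sequence of moves from `η`. -/
def LegalSeq {d : ℕ} (sus : Set (Fin d → ℤ)) (η : (Fin d → ℤ) → Bool)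
    (ms : ℕ → (Fin d → ℤ) × Bool) (k : ℕ) : Prop :=
  ∀ i < k, (ms i).1 ∈ sus ∧ Constr sus (evolve η ms i) (ms i).1

/-- The move `m` is censored by `X`: it would set a site of `X` to healthy. -/
def Censored {d : ℕ} (X : Set (Fin d → ℤ)) (m : (Fin d → ℤ) × Bool) : Prop :=
  m.1 ∈ X ∧ m.2 = false

/-- The configuration after applying the first `n` moves of `ms` to `η`, where every move
that would set a site of `X` to healthy is ignored (replaced by no move). -/
noncomputable def evolveC {d : ℕ} (X : Set (Fin d → ℤ)) (η : (Fin d → ℤ) → Bool)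
    (ms : ℕ → (Fin d → ℤ) × Bool) : ℕ → ((Fin d → ℤ) → Bool)
  | 0 => η
  | n + 1 =>
    if Censored X (ms n) then evolveC X η ms n
    else Function.update (evolveC X η ms n) (ms n).1 (ms n).2

lemma adjD_finite {d : ℕ} (x : Fin d → ℤ) : {y : Fin d → ℤ | AdjD x y}.Finite := by
  apply Set.Finite.subset (Set.finite_iUnion (fun j : Fin d =>
    (Set.finite_singleton (Function.update x j (x j - 1))).insert
      (Function.update x j (x j + 1))))
  rintro y ⟨j, hj, hoth⟩
  apply Set.mem_iUnion.2
  refine ⟨j, ?_⟩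
  rcases hj with hj | hj
  · left
    funext i
    by_cases h : i = j
    · subst h; simpa using hj
    · simp [Function.update_of_ne h, hoth i h]
  · right
    refine Set.mem_singleton_iff.2 ?_
    funext i
    by_cases h : i = j
    · subst h; simpa using hj
    · simp [Function.update_of_ne h, hoth i h]

lemma key_evolve {d : ℕ} (X : Set (Fin d → ℤ)) (η : (Fin d → ℤ) → Bool)
    (ms : ℕ → (Fin d → ℤ) × Bool) (i : ℕ) :
    (∀ y, evolveC X η ms i y ≠ evolve η ms i y → y ∈ X) ∧
    (∀ y, evolve η ms i y = true → evolveC X η ms i y = true) := by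
  induction i with
  | zero => exact ⟨fun y h => absurd rfl h, fun y h => h⟩
  | succ n ih =>
    by_cases hc : Censored X (ms n)
    · constructor
      · intro y h
        simp only [evolve, evolveC, if_pos hc] at h
        by_cases hy : y = (ms n).1
        · subst hy; exact hc.1
        · rw [Function.update_of_ne hy] at h
          exact ih.1 y h
      · intro y h
        simp only [evolve] at h
        simp only [evolveC, if_pos hc]
        by_cases hy : y = (ms n).1
        · subst hy; rw [Function.update_self] at h; rw [hc.2] at h; exact absurd h (by simp)
        · rw [Function.update_of_ne hy] at h
          exact ih.2 y h
    · constructor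
      · intro y h
        simp only [evolve, evolveC, if_neg hc] at h
        by_cases hy : y = (ms n).1
        · subst hy; simp at h
        · rw [Function.update_of_ne hy, Function.update_of_ne hy] at h
          exact ih.1 y h
      · intro y h
        simp only [evolve] at h
        simp only [evolveC, if_neg hc]
        by_cases hy : y = (ms n).1
        · subst hy; rwa [Function.update_self] at h ⊢
        · rw [Function.update_of_ne hy] at h ⊢
          exact ih.2 y h

theorem censored_legal {d : ℕ} (hd : 1 ≤ d) (sus : Set (Fin d → ℤ))
    (η : (Fin d → ℤ) → Bool) (ms : ℕ → (Fin d → ℤ) × Bool) (k : ℕ)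
    (hleg : LegalSeq sus η ms k) (X : Set (Fin d → ℤ)) (hX : X ⊆ sus) :
    -- Γ^X is a legal sequence of moves from η (censored moves are no moves,
    -- and every non-censored move is legal when it is made):
    (∀ i < k, ¬Censored X (ms i) →
      (ms i).1 ∈ sus ∧ Constr sus (evolveC X η ms i) (ms i).1) ∧
    -- Γ_i(η) and Γ^X_i(η) differ only on sites of X:
    (∀ i ≤ k, {y : Fin d → ℤ | evolveC X η ms i y ≠ evolve η ms i y} ⊆ X) ∧
    -- the infected sites of Γ_i(η) are contained in those of Γ^X_i(η):
    (∀ i ≤ k, {y : Fin d → ℤ | Infct sus (evolve η ms i) y} ⊆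
      {y : Fin d → ℤ | Infct sus (evolveC X η ms i) y}) ∧
    -- the final configuration differs from Γ_k(η) only on X:
    {y : Fin d → ℤ | evolveC X η ms k y ≠ evolve η ms k y} ⊆ X := by
  have hdiff : ∀ i : ℕ, {y : Fin d → ℤ | evolveC X η ms i y ≠ evolve η ms i y} ⊆ X :=
    fun i y hy => (key_evolve X η ms i).1 y hy
  have hinf : ∀ i : ℕ, {y : Fin d → ℤ | Infct sus (evolve η ms i) y} ⊆
      {y : Fin d → ℤ | Infct sus (evolveC X η ms i) y} := by
    intro i y hy
    exact ⟨hy.1, (key_evolve X η ms i).2 y hy.2⟩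
  refine ⟨?_, fun i _ => hdiff i, fun i _ => hinf i, hdiff k⟩
  intro i hi _
  obtain ⟨hmem, hcon⟩ := hleg i hi
  refine ⟨hmem, ?_⟩
  unfold Constr at hcon ⊢
  refine le_trans hcon (Set.ncard_le_ncard ?_ ?_)
  · intro y hy
    exact ⟨hy.1, hinf i hy.2⟩
  · exact (adjD_finite (ms i).1).subset (fun y hy => hy.1)
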